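/- arXiv:1402.1698 — 2 statements merged into one kernel-verified Lean document; each statement's English description precedes it below -/
import Mathlib

section
/- The mean jump rate function Φ = R^{-1} is Lipschitz continuous on [0, ρ_c) with Lipschitz constant at most ‖g'‖_∞, i.e. |Φ(ρ₁) − Φ(ρ₂)| ≤ ‖g'‖_∞ |ρ₁ − ρ₂| for all ρ₁, ρ₂ ∈ [0, ρ_c). -/
/-!
Put `f k = L k - g k`; it is nondecreasing because `g` is `L`-Lipschitz, and the identity
`E_φ[g(η)] = φ` gives `E_φ[f(η)] = L R(φ) - φ`. The weights `φ ^ k / g!(k)` have a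
likelihood ratio that is monotone in `k` as `φ` grows, so by Chebyshev's correlation
inequality `E_φ[f(η)]` is nondecreasing in `φ`. Hence `φ ↦ L R(φ) - φ` is nondecreasing,
which at `φ = Φ(ρ)` is the Lipschitz bound for `Φ`.
-/

theorem tsum_mul_mul_tsum_le_of_monotone {ι : Type*} [LinearOrder ι] {f a b : ι → ℝ}
    (hf : Monotone f) (hab : ∀ j k, j ≤ k → a k * b j ≤ a j * b k)
    (ha : Summable a) (hb : Summable b)
    (hfa : Summable fun k => f k * a k) (hfb : Summable fun k => f k * b k) :
    (∑' k, f k * a k) * ∑' k, b k ≤ (∑' k, f k * b k) * ∑' k, a k := by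
  set F : ι × ι → ℝ := fun p => f p.1 * a p.1 * b p.2
  set G : ι × ι → ℝ := fun p => f p.1 * b p.1 * a p.2
  have hF : Summable F := summable_mul_of_summable_norm hfa.norm hb.norm
  have hG : Summable G := summable_mul_of_summable_norm hfb.norm ha.norm
  -- Symmetrize over `(j, k) ↦ (k, j)` and apply the binary rearrangement inequality pointwise.
  have pointwise : ∀ p, F p + F p.swap ≤ G p + G p.swap := by
    rintro ⟨j, k⟩
    wlog hjk : j ≤ k generalizing j k
    · have := this k j (le_of_not_ge hjk)
      simp only [F, G, Prod.swap] at this ⊢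
      linarith
    have := mul_add_mul_le_mul_add_mul (hf hjk) (hab j k hjk)
    simp only [F, G, Prod.swap]
    linarith
  have hswap (H : ι × ι → ℝ) : ∑' p : ι × ι, H p.swap = ∑' p, H p :=
    (Equiv.prodComm ι ι).tsum_eq H
  have hFG : ∑' p, F p ≤ ∑' p, G p := by
    have hFs : Summable fun p : ι × ι => F p.swap := hF.comp_injective Prod.swap_injective
    have hGs : Summable fun p : ι × ι => G p.swap := hG.comp_injective Prod.swap_injective
    have := Summable.tsum_le_tsum pointwise (hF.add hFs) (hG.add hGs)
    rw [hF.tsum_add hFs, hG.tsum_add hGs, hswap, hswap] at this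
    linarith
  rwa [tsum_mul_tsum_of_summable_norm hfa.norm hb.norm,
    tsum_mul_tsum_of_summable_norm hfb.norm ha.norm]

theorem summable_natCast_mul_pow_div {G : ℕ → ℝ} {c φ : ℝ}
    (hsum : ∀ ψ : ℝ, 0 ≤ ψ → ψ < c → Summable fun k : ℕ => ψ ^ k / G k)
    (hφ0 : 0 ≤ φ) (hφc : φ < c) :
    Summable fun k : ℕ => (k : ℝ) * (φ ^ k / G k) := by
  obtain ⟨ψ, hφψ, hψc⟩ := exists_between hφc
  have hψ : 0 < ψ := hφ0.trans_lt hφψ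
  obtain ⟨C, hC⟩ := (tendsto_self_mul_const_pow_of_lt_one (div_nonneg hφ0 hψ.le)
    ((div_lt_one hψ).2 hφψ)).bddAbove_range
  refine Summable.of_norm_bounded ((hsum ψ hψ.le hψc).norm.mul_left C) fun k => ?_
  calc ‖(k : ℝ) * (φ ^ k / G k)‖ = k * (φ / ψ) ^ k * ‖ψ ^ k / G k‖ := by
        rw [norm_mul, norm_div, norm_div, norm_pow, norm_pow, Real.norm_of_nonneg hφ0,
          Real.norm_of_nonneg hψ.le, Real.norm_natCast, div_pow]
        field_simp
    _ ≤ C * ‖ψ ^ k / G k‖ := by gcongr; exact hC ⟨k, rfl⟩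

theorem pow_div_mul_pow_div_le {G : ℕ → ℝ} (hG : ∀ k, 0 ≤ G k) {φ₁ φ₂ : ℝ}
    (hφ₁ : 0 ≤ φ₁) (h12 : φ₁ ≤ φ₂) {j k : ℕ} (hjk : j ≤ k) :
    φ₁ ^ k / G k * (φ₂ ^ j / G j) ≤ φ₁ ^ j / G j * (φ₂ ^ k / G k) := by
  obtain ⟨m, rfl⟩ := Nat.exists_eq_add_of_le hjk
  rw [div_mul_div_comm, div_mul_div_comm, mul_comm (G j)]
  have : φ₁ ^ m ≤ φ₂ ^ m := pow_le_pow_left₀ hφ₁ h12 m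
  have : 0 ≤ φ₂ := hφ₁.trans h12
  gcongr (?_ : ℝ) / _
  · exact mul_nonneg (hG _) (hG _)
  calc φ₁ ^ (j + m) * φ₂ ^ j = φ₁ ^ j * φ₂ ^ j * φ₁ ^ m := by ring
    _ ≤ φ₁ ^ j * φ₂ ^ j * φ₂ ^ m := by gcongr
    _ = φ₁ ^ j * φ₂ ^ (j + m) := by ring

section

variable {g gfact : ℕ → ℝ}

theorem gfact_pos (hg : ∀ k : ℕ, 0 < k → 0 < g k) (hgfact0 : gfact 0 = 1)
    (hgfact : ∀ k, gfact (k + 1) = gfact k * g (k + 1)) (k : ℕ) : 0 < gfact k := by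
  induction k with
  | zero => simp [hgfact0]
  | succ k ih => rw [hgfact]; exact mul_pos ih (hg _ k.succ_pos)

theorem hasSum_mul_pow_div_gfact (hg0 : g 0 = 0) (hg : ∀ k : ℕ, 0 < k → 0 < g k)
    (hgfact : ∀ k, gfact (k + 1) = gfact k * g (k + 1)) {φ : ℝ}
    (hφ : Summable fun k : ℕ => φ ^ k / gfact k) :
    HasSum (fun k => g k * (φ ^ k / gfact k)) (φ * ∑' k : ℕ, φ ^ k / gfact k) := by
  have shift : (fun k => g (k + 1) * (φ ^ (k + 1) / gfact (k + 1))) =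
      fun k => φ * (φ ^ k / gfact k) := by
    funext k
    have : g (k + 1) ≠ 0 := (hg _ k.succ_pos).ne'
    rw [hgfact, pow_succ]
    field_simp
  rw [← hasSum_nat_add_iff' 1, shift]
  simpa [hg0] using hφ.hasSum.mul_left φ

end

theorem monotoneOn_const_mul_sub_self {g gfact : ℕ → ℝ} {R : ℝ → ℝ} {L phic : ℝ}
    (hg0 : g 0 = 0) (hg : ∀ k : ℕ, 0 < k → 0 < g k)
    (hL : ∀ k : ℕ, |g (k + 1) - g k| ≤ L)
    (hgfact0 : gfact 0 = 1) (hgfact : ∀ k, gfact (k + 1) = gfact k * g (k + 1))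
    (hsum : ∀ ψ : ℝ, 0 ≤ ψ → ψ < phic → Summable (fun k : ℕ => ψ ^ k / gfact k))
    (hR : ∀ φ ∈ Set.Ico (0:ℝ) phic,
      R φ = ∑' k : ℕ, (k : ℝ) * ((φ ^ k / gfact k) / (∑' j : ℕ, φ ^ j / gfact j))) :
    MonotoneOn (fun φ => L * R φ - φ) (Set.Ico 0 phic) := by
  have hG := gfact_pos hg hgfact0 hgfact
  set f : ℕ → ℝ := fun k => L * k - g k
  have hf : Monotone f := monotone_nat_of_le_succ fun k => by
    have := (abs_le.1 (hL k)).2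
    simp only [f, Nat.cast_succ]
    linarith
  have mean : ∀ φ ∈ Set.Ico 0 phic, Summable (fun k => f k * (φ ^ k / gfact k)) ∧
      0 < ∑' k : ℕ, φ ^ k / gfact k ∧
      L * R φ - φ = (∑' k, f k * (φ ^ k / gfact k)) / ∑' k : ℕ, φ ^ k / gfact k := by
    rintro φ ⟨hφ0, hφc⟩
    have hw := hsum φ hφ0 hφc
    have hfw : HasSum (fun k => f k * (φ ^ k / gfact k))
        (L * ∑' k : ℕ, k * (φ ^ k / gfact k) - φ * ∑' k : ℕ, φ ^ k / gfact k) := by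
      simpa only [f, sub_mul, mul_assoc] using
        ((summable_natCast_mul_pow_div hsum hφ0 hφc).hasSum.mul_left L).sub
          (hasSum_mul_pow_div_gfact hg0 hg hgfact hw)
    have hZ : 0 < ∑' k : ℕ, φ ^ k / gfact k :=
      lt_of_lt_of_le (by simp [hgfact0])
        (hw.le_tsum 0 fun k _ => div_nonneg (pow_nonneg hφ0 k) (hG k).le)
    refine ⟨hfw.summable, hZ, ?_⟩
    rw [hfw.tsum_eq, hR φ ⟨hφ0, hφc⟩]
    simp_rw [← mul_div_assoc]
    rw [tsum_div_const]
    field_simp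
  intro φ₁ h₁ φ₂ h₂ h12
  obtain ⟨hs₁, hZ₁, he₁⟩ := mean φ₁ h₁
  obtain ⟨hs₂, hZ₂, he₂⟩ := mean φ₂ h₂
  simp only [he₁, he₂]
  rw [div_le_div_iff₀ hZ₁ hZ₂]
  exact tsum_mul_mul_tsum_le_of_monotone hf
    (fun j k hjk => pow_div_mul_pow_div_le (fun k => (hG k).le) h₁.1 h12 hjk)
    (hsum _ h₁.1 h₁.2) (hsum _ h₂.1 h₂.2) hs₁ hs₂

theorem abs_sub_le_mul_abs_sub_of_monotoneOn {R : ℝ → ℝ} {s : Set ℝ} {L : ℝ}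
    (hL : 0 ≤ L) (h : MonotoneOn (fun x => L * R x - x) s) {x y : ℝ} (hx : x ∈ s) (hy : y ∈ s) :
    |x - y| ≤ L * |R x - R y| := by
  wlog hxy : y ≤ x generalizing x y
  · rw [abs_sub_comm, abs_sub_comm (R x)]
    exact this hy hx (le_of_not_ge hxy)
  have := h hy hx hxy
  rw [abs_of_nonneg (sub_nonneg.2 hxy)]
  calc x - y ≤ L * (R x - R y) := by linarith
    _ ≤ L * |R x - R y| := by gcongr; exact le_abs_self _

/-- The mean jump rate Φ = R⁻¹ is Lipschitz on [0,ρ_c) with constant ‖g'‖_∞. -/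
theorem stmt5 (g : ℕ → ℝ) (L : ℝ) (hg0 : g 0 = 0) (hg : ∀ k : ℕ, 0 < k → 0 < g k)
    (hL : ∀ k : ℕ, |g (k + 1) - g k| ≤ L)
    (gfact : ℕ → ℝ) (hgfact0 : gfact 0 = 1)
    (hgfact : ∀ k, gfact (k + 1) = gfact k * g (k + 1))
    (phic rhoc : ℝ)
    (hsum : ∀ ψ : ℝ, 0 ≤ ψ → ψ < phic → Summable (fun k : ℕ => ψ ^ k / gfact k))
    (R : ℝ → ℝ)
    (hR : ∀ φ ∈ Set.Ico (0:ℝ) phic,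
      R φ = ∑' k : ℕ, (k : ℝ) * ((φ ^ k / gfact k) / (∑' j : ℕ, φ ^ j / gfact j)))
    (Φ : ℝ → ℝ)
    (hΦmem : ∀ ρ ∈ Set.Ico (0:ℝ) rhoc, Φ ρ ∈ Set.Ico 0 phic)
    (hΦR : ∀ ρ ∈ Set.Ico (0:ℝ) rhoc, R (Φ ρ) = ρ) :
    ∀ ρ₁ ∈ Set.Ico (0:ℝ) rhoc, ∀ ρ₂ ∈ Set.Ico (0:ℝ) rhoc,
      |Φ ρ₁ - Φ ρ₂| ≤ L * |ρ₁ - ρ₂| := by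
  intro ρ₁ h₁ ρ₂ h₂
  have hL0 : 0 ≤ L := (abs_nonneg _).trans (hL 0)
  have := abs_sub_le_mul_abs_sub_of_monotoneOn hL0
    (monotoneOn_const_mul_sub_self hg0 hg hL hgfact0 hgfact hsum hR)
    (hΦmem ρ₁ h₁) (hΦmem ρ₂ h₂)
  rwa [hΦR ρ₁ h₁, hΦR ρ₂ h₂] at this
end

section
/- The Legendre transform Λ_ρ*(λ) := sup_{r∈ℝ} {λr − Λ_ρ(r)} of the logarithmic moment generating function Λ_ρ(r) = log(Z(e^r Φ(ρ))/Z(Φ(ρ))) of the zero-range one-site distribution ν¹_ρ is given for 0 ≤ λ < ρ_c by Λ_ρ*(λ) = λ log(Φ(λ)/Φ(ρ)) − log(Z(Φ(λ))/Z(Φ(ρ))), i.e. the supremum over r is attained at r = log(Φ(λ)/Φ(ρ)). -/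
/-!
Writing `c = ψ / Φ(λ)`, the tangent line of the convex function `t ↦ c ^ t` at `t = λ` gives
`c ^ k ≥ c ^ λ (1 + (k - λ) log c)` for every `k`. Multiplying by the weights `Φ(λ) ^ k / g!(k)` and
summing, the linear term cancels because `Φ(λ)` is the fugacity of mean density `λ`, so
`Z(ψ) ≥ Z(Φ(λ)) (ψ / Φ(λ)) ^ λ` for all admissible `ψ`. Taking logarithms with `ψ = e ^ r Φ(ρ)` bounds
`λ r - Λ_ρ(r)` by its value at `r = log (Φ(λ) / Φ(ρ))`, which is therefore the maximum.
-/

open Real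

theorem rpow_mul_one_add_sub_mul_log_le_rpow {c : ℝ} (hc : 0 < c) (x y : ℝ) :
    c ^ y * (1 + (x - y) * log c) ≤ c ^ x := by
  rw [rpow_def_of_pos hc, rpow_def_of_pos hc]
  calc exp (log c * y) * (1 + (x - y) * log c)
      ≤ exp (log c * y) * exp ((x - y) * log c) := by
        gcongr; linarith [add_one_le_exp ((x - y) * log c)]
    _ = exp (log c * x) := by rw [← exp_add]; ring_nf

theorem tsum_pow_div_pos {g : ℕ → ℝ} (hg : ∀ k, 0 < g k) {ψ : ℝ} (hψ : 0 ≤ ψ)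
    (hs : Summable fun k : ℕ => ψ ^ k / g k) : 0 < ∑' k : ℕ, ψ ^ k / g k :=
  calc (0 : ℝ) < ψ ^ 0 / g 0 := by simpa using hg 0
    _ ≤ ∑' k : ℕ, ψ ^ k / g k :=
      hs.le_tsum 0 fun k _ => div_nonneg (pow_nonneg hψ k) (hg k).le

theorem tsum_pow_div_mul_rpow_le_of_hasSum_mean {g : ℕ → ℝ} (hg : ∀ k, 0 ≤ g k) {φ ψ m : ℝ}
    (hφ : 0 < φ) (hψ : 0 < ψ) (hsφ : Summable fun k : ℕ => φ ^ k / g k)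
    (hsψ : Summable fun k : ℕ => ψ ^ k / g k)
    (hmean : HasSum (fun k : ℕ => (k : ℝ) * (φ ^ k / g k)) (m * ∑' k : ℕ, φ ^ k / g k)) :
    (∑' k : ℕ, φ ^ k / g k) * (ψ / φ) ^ m ≤ ∑' k : ℕ, ψ ^ k / g k := by
  set c := ψ / φ with hc
  set a : ℕ → ℝ := fun k => φ ^ k / g k
  have hterm : ∀ k : ℕ,
      c ^ m * (1 - m * log c) * a k + c ^ m * log c * (k * a k) ≤ ψ ^ k / g k := by
    intro k
    have htangent := rpow_mul_one_add_sub_mul_log_le_rpow (div_pos hψ hφ) k m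
    rw [rpow_natCast] at htangent
    calc c ^ m * (1 - m * log c) * a k + c ^ m * log c * (k * a k)
        = a k * (c ^ m * (1 + (k - m) * log c)) := by ring
      _ ≤ a k * c ^ k :=
        mul_le_mul_of_nonneg_left htangent (div_nonneg (pow_nonneg hφ.le k) (hg k))
      _ = ψ ^ k / g k := by
        simp only [a, hc, div_pow]; field_simp
  have hlinear := (hsφ.hasSum.mul_left (c ^ m * (1 - m * log c))).add
    (hmean.mul_left (c ^ m * log c))
  calc (∑' k : ℕ, a k) * c ^ m
      = c ^ m * (1 - m * log c) * ∑' k : ℕ, a k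
          + c ^ m * log c * (m * ∑' k : ℕ, a k) := by ring
    _ ≤ ∑' k : ℕ, ψ ^ k / g k := hasSum_le hterm hlinear hsψ.hasSum

theorem mul_sub_log_div_le_of_mul_rpow_le {z z₀ z₁ φ₀ φ₁ m : ℝ} (hz₀ : 0 < z₀) (hz₁ : 0 < z₁)
    (hφ₀ : 0 < φ₀) (hφ₁ : 0 < φ₁) (r : ℝ) (h : z₁ * (exp r * φ₀ / φ₁) ^ m ≤ z) :
    m * r - log (z / z₀) ≤ m * log (φ₁ / φ₀) - log (z₁ / z₀) := by
  have hratio : 0 < exp r * φ₀ / φ₁ := by positivity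
  have hlhs : 0 < z₁ * (exp r * φ₀ / φ₁) ^ m := by positivity
  have hlog := log_le_log hlhs h
  rw [log_mul hz₁.ne' (rpow_pos_of_pos hratio m).ne', log_rpow hratio,
    log_div (by positivity) hφ₁.ne', log_mul (exp_pos r).ne' hφ₀.ne', log_exp] at hlog
  rw [log_div (hlhs.trans_le h).ne' hz₀.ne', log_div hz₁.ne' hz₀.ne', log_div hφ₁.ne' hφ₀.ne']
  linarith

theorem stmt10_general (gfact : ℕ → ℝ) (hgfact : ∀ k, 0 < gfact k)
    (phic rhoc : ℝ)
    (hsum : ∀ ψ : ℝ, 0 ≤ ψ → ψ < phic → Summable (fun k : ℕ => ψ ^ k / gfact k))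
    (Z : ℝ → ℝ) (hZ : ∀ ψ, Z ψ = ∑' k : ℕ, ψ ^ k / gfact k)
    (Φ : ℝ → ℝ)
    (hΦmem : ∀ ρ ∈ Set.Ico (0:ℝ) rhoc, Φ ρ ∈ Set.Ico 0 phic)
    (hΦpos : ∀ ρ ∈ Set.Ioo (0:ℝ) rhoc, 0 < Φ ρ)
    (hΦR : ∀ lam ∈ Set.Ico (0:ℝ) rhoc,
      ∑' k : ℕ, (k : ℝ) * (Φ lam ^ k / gfact k) = lam * ∑' k : ℕ, Φ lam ^ k / gfact k)
    (ρ lam : ℝ) (hρ : ρ ∈ Set.Ioo 0 rhoc) (hlam : lam ∈ Set.Ioo 0 rhoc) :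
    (∀ r : ℝ, Real.exp r * Φ ρ < phic →
        lam * r - Real.log (Z (Real.exp r * Φ ρ) / Z (Φ ρ))
          ≤ lam * Real.log (Φ lam / Φ ρ) - Real.log (Z (Φ lam) / Z (Φ ρ))) ∧
    sSup {y : ℝ | ∃ r : ℝ, Real.exp r * Φ ρ < phic ∧
        y = lam * r - Real.log (Z (Real.exp r * Φ ρ) / Z (Φ ρ))}
      = lam * Real.log (Φ lam / Φ ρ) - Real.log (Z (Φ lam) / Z (Φ ρ)) := by
  have hΦρ := hΦpos ρ hρ
  have hΦlam := hΦpos lam hlam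
  have hΦlam_lt := (hΦmem lam (Set.Ioo_subset_Ico_self hlam)).2
  have hZpos : ∀ ψ, 0 ≤ ψ → ψ < phic → 0 < Z ψ := fun ψ h0 h1 =>
    hZ ψ ▸ tsum_pow_div_pos hgfact h0 (hsum ψ h0 h1)
  have hZΦlam := hZpos _ hΦlam.le hΦlam_lt
  have hmean := hΦR lam (Set.Ioo_subset_Ico_self hlam)
  have hmean_summable : Summable fun k : ℕ => (k : ℝ) * (Φ lam ^ k / gfact k) := by
    by_contra hns
    rw [tsum_eq_zero_of_not_summable hns, ← hZ] at hmean
    exact (mul_pos hlam.1 hZΦlam).ne' hmean.symm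
  have hbound : ∀ r : ℝ, exp r * Φ ρ < phic →
      lam * r - log (Z (exp r * Φ ρ) / Z (Φ ρ))
        ≤ lam * log (Φ lam / Φ ρ) - log (Z (Φ lam) / Z (Φ ρ)) := by
    intro r hr
    have hψ : 0 < exp r * Φ ρ := by positivity
    refine mul_sub_log_div_le_of_mul_rpow_le
      (hZpos _ hΦρ.le (hΦmem ρ (Set.Ioo_subset_Ico_self hρ)).2) hZΦlam hΦρ hΦlam r ?_
    rw [hZ, hZ]
    exact tsum_pow_div_mul_rpow_le_of_hasSum_mean (fun k => (hgfact k).le) hΦlam hψ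
      (hsum _ hΦlam.le hΦlam_lt) (hsum _ hψ.le hr) (hmean ▸ hmean_summable.hasSum)
  have hattained : exp (log (Φ lam / Φ ρ)) * Φ ρ = Φ lam := by
    rw [exp_log (div_pos hΦlam hΦρ), div_mul_cancel₀ _ hΦρ.ne']
  refine ⟨hbound, IsGreatest.csSup_eq ⟨⟨log (Φ lam / Φ ρ), ?_, ?_⟩, ?_⟩⟩
  · rwa [hattained]
  · rw [hattained]
  · rintro y ⟨r, hr, rfl⟩
    exact hbound r hr

/-- The Legendre transform of the log-moment generating function of the
one-site zero range distribution: the sup over r is attained at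
r = log(Φ(λ)/Φ(ρ)) and equals λ log(Φ(λ)/Φ(ρ)) − log(Z(Φ(λ))/Z(Φ(ρ))). -/
theorem stmt10 (gfact : ℕ → ℝ) (hgfact : ∀ k, 0 < gfact k) (hgfact0 : gfact 0 = 1)
    (phic rhoc : ℝ) (hphic : 0 < phic)
    (hsum : ∀ ψ : ℝ, 0 ≤ ψ → ψ < phic → Summable (fun k : ℕ => ψ ^ k / gfact k))
    (Z : ℝ → ℝ) (hZ : ∀ ψ, Z ψ = ∑' k : ℕ, ψ ^ k / gfact k)
    (Φ : ℝ → ℝ)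
    (hΦmem : ∀ ρ ∈ Set.Ico (0:ℝ) rhoc, Φ ρ ∈ Set.Ico 0 phic)
    (hΦpos : ∀ ρ ∈ Set.Ioo (0:ℝ) rhoc, 0 < Φ ρ)
    (hΦR : ∀ lam ∈ Set.Ico (0:ℝ) rhoc,
      ∑' k : ℕ, (k : ℝ) * (Φ lam ^ k / gfact k) = lam * ∑' k : ℕ, Φ lam ^ k / gfact k)
    (ρ lam : ℝ) (hρ : ρ ∈ Set.Ioo 0 rhoc) (hlam : lam ∈ Set.Ioo 0 rhoc) :
    (∀ r : ℝ, Real.exp r * Φ ρ < phic →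
        lam * r - Real.log (Z (Real.exp r * Φ ρ) / Z (Φ ρ))
          ≤ lam * Real.log (Φ lam / Φ ρ) - Real.log (Z (Φ lam) / Z (Φ ρ))) ∧
    sSup {y : ℝ | ∃ r : ℝ, Real.exp r * Φ ρ < phic ∧
        y = lam * r - Real.log (Z (Real.exp r * Φ ρ) / Z (Φ ρ))}
      = lam * Real.log (Φ lam / Φ ρ) - Real.log (Z (Φ lam) / Z (Φ ρ)) :=
  stmt10_general gfact hgfact phic rhoc hsum Z hZ Φ hΦmem hΦpos hΦR ρ lam hρ hlam
end
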